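/- arXiv:1911.08300 — 8 statements merged into one kernel-verified Lean document; each statement's English description precedes it below -/
import Mathlib

section
/- For integers n, p with 2 ≤ p ≤ n-2, the integral ∫_{-1}^{1} x·(x+n-p)^{n-p-1}·(p-x)^{p-1} dx equals -(1/n)·((p-1)^p·(n-p+1)^{n-p} - (p+1)^p·(n-p-1)^{n-p}). -/
theorem hasDerivAt_add_pow_mul_sub_pow {k l : ℕ} (hk : k ≠ 0) (hl : l ≠ 0) (a b x : ℝ) :
    HasDerivAt (fun x => (x + a) ^ k * (b - x) ^ l)
      ((k * (b - x) - l * (x + a)) * (x + a) ^ (k - 1) * (b - x) ^ (l - 1)) x := by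
  have hleft := ((hasDerivAt_id' x).add_const a).fun_pow k
  have hright := ((hasDerivAt_id' x).const_sub b).fun_pow l
  refine (hleft.mul hright).congr_deriv ?_
  obtain ⟨k, rfl⟩ := Nat.exists_eq_succ_of_ne_zero hk
  obtain ⟨l, rfl⟩ := Nat.exists_eq_succ_of_ne_zero hl
  simp only [Nat.succ_sub_one, pow_succ]
  ring

/-- When `k * b = l * a`, the factor `k * (b - x) - l * (x + a)` of the derivative of
`(x + a) ^ k * (b - x) ^ l` collapses to `-(k + l) * x`. -/
theorem integral_mul_add_pow_mul_sub_pow {k l : ℕ} (hk : k ≠ 0) (hl : l ≠ 0) {a b : ℝ}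
    (hab : k * b = l * a) (u v : ℝ) :
    ∫ x in u..v, x * (x + a) ^ (k - 1) * (b - x) ^ (l - 1)
      = -((v + a) ^ k * (b - v) ^ l - (u + a) ^ k * (b - u) ^ l) / (k + l) := by
  have hkl : (k + l : ℝ) ≠ 0 := by positivity
  have hderiv (x : ℝ) : HasDerivAt (fun x => -((x + a) ^ k * (b - x) ^ l) / (k + l))
      (x * (x + a) ^ (k - 1) * (b - x) ^ (l - 1)) x := by
    refine ((hasDerivAt_add_pow_mul_sub_pow hk hl a b x).neg.div_const
      ((k : ℝ) + l)).congr_deriv ?_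
    field_simp
    linear_combination -(x + a) ^ (k - 1) * (b - x) ^ (l - 1) * hab
  rw [intervalIntegral.integral_eq_sub_of_hasDerivAt (fun x _ => hderiv x)
    (by apply Continuous.intervalIntegrable; fun_prop)]
  ring

theorem stmt_0 (n p : ℕ) (hp : 2 ≤ p) (hn : p + 2 ≤ n) :
    ∫ x in (-1:ℝ)..1, x * (x + (n:ℝ) - p) ^ (n - p - 1) * ((p:ℝ) - x) ^ (p - 1)
      = -(1 / (n:ℝ)) * (((p:ℝ) - 1) ^ p * ((n:ℝ) - p + 1) ^ (n - p)
        - ((p:ℝ) + 1) ^ p * ((n:ℝ) - p - 1) ^ (n - p)) := by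
  obtain ⟨m, rfl⟩ : ∃ m, n = p + m := ⟨n - p, by omega⟩
  have hintegral := integral_mul_add_pow_mul_sub_pow (k := m) (l := p) (a := m) (b := p)
    (by omega) (by omega) (mul_comm _ _) (-1) 1
  have hshift (x : ℝ) : x + ((p + m : ℕ) : ℝ) - p = x + m := by push_cast; ring
  simp only [hshift, Nat.add_sub_cancel_left]
  rw [hintegral]
  push_cast
  ring
end

section
/- The function x ↦ (x-1)/(x+1), raised to the power x, i.e. f(x) = ((x-1)/(x+1))^x = exp(x·log((x-1)/(x+1))), is strictly increasing on the open interval (1, ∞). -/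
/-!
Write `g x = x * log ((x - 1) / (x + 1))`; it suffices that `g` is strictly increasing on
`(1, ∞)`. With `u = (x + 1) / (x - 1) > 1` one has `g' x = -log u + 2x / (x² - 1)` and
`2x / (x² - 1) = (u - u⁻¹) / 2 = sinh (log u)`, so `g' x > 0` is the inequality `t < sinh t`
for `t = log u > 0`.
-/

open Real Set

lemma Real.log_lt_half_sub_inv {u : ℝ} (hu : 1 < u) : log u < (u - u⁻¹) / 2 := by
  have hu₀ : 0 < u := zero_lt_one.trans hu
  simpa [sinh_eq, exp_neg, exp_log hu₀] using self_lt_sinh_iff.mpr (log_pos hu)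

lemma hasDerivAt_mul_log_sub_one_div_add_one {x : ℝ} (hx : 1 < x) :
    HasDerivAt (fun x : ℝ => x * log ((x - 1) / (x + 1)))
      (log ((x - 1) / (x + 1)) + x * (2 / ((x - 1) * (x + 1)))) x := by
  have hm : 0 < x - 1 := by linarith
  have hp : 0 < x + 1 := by linarith
  have hq : HasDerivAt (fun x : ℝ => (x - 1) / (x + 1)) (2 / (x + 1) ^ 2) x := by
    refine (((hasDerivAt_id' x).sub_const 1).fun_div ((hasDerivAt_id' x).add_const 1)
      hp.ne').congr_deriv ?_
    ring
  refine ((hasDerivAt_id' x).fun_mul (hq.log (div_pos hm hp).ne')).congr_deriv ?_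
  field_simp

lemma log_sub_one_div_add_one_add_pos {x : ℝ} (hx : 1 < x) :
    0 < log ((x - 1) / (x + 1)) + x * (2 / ((x - 1) * (x + 1))) := by
  have hm : 0 < x - 1 := by linarith
  have hp : 0 < x + 1 := by linarith
  have hu : 1 < (x + 1) / (x - 1) := by rw [one_lt_div hm]; linarith
  have hsinh :
      ((x + 1) / (x - 1) - ((x + 1) / (x - 1))⁻¹) / 2 = x * (2 / ((x - 1) * (x + 1))) := by
    field_simp
    ring
  rw [← inv_div, log_inv, ← hsinh]
  linarith [log_lt_half_sub_inv hu]

lemma strictMonoOn_mul_log_sub_one_div_add_one :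
    StrictMonoOn (fun x : ℝ => x * log ((x - 1) / (x + 1))) (Ioi 1) := by
  refine strictMonoOn_of_hasDerivWithinAt_pos (convex_Ioi 1)
    (f' := fun x => log ((x - 1) / (x + 1)) + x * (2 / ((x - 1) * (x + 1))))
    (fun x hx => (hasDerivAt_mul_log_sub_one_div_add_one hx).continuousAt.continuousWithinAt)
    ?_ ?_ <;> rw [interior_Ioi]
  · exact fun x hx => (hasDerivAt_mul_log_sub_one_div_add_one hx).hasDerivWithinAt
  · exact fun x hx => log_sub_one_div_add_one_add_pos hx

theorem stmt_1 :
    StrictMonoOn (fun x : ℝ => Real.exp (x * Real.log ((x - 1) / (x + 1)))) (Set.Ioi 1) :=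
  Real.exp_strictMono.comp_strictMonoOn strictMonoOn_mul_log_sub_one_div_add_one
end

section
/- For all real y with 0 < y < 1, the identity log(1-y) + (y·(2-y))/(2·(1-y)) = Σ_{k=0}^{∞} ((k+1)/(2·(k+3)))·y^{k+3} holds, where the series converges. -/
/-!
Since `(k + 1) / (2 (k + 3)) = 1/2 - 1/(k + 3)`, the series splits into half a geometric
tail, `y³ / (2 (1 - y))`, minus a tail of the logarithmic series
`-log (1 - y) = ∑ yⁿ⁺¹ / (n + 1)`, namely `-log (1 - y) - y - y² / 2`; the identity is then
algebra.
-/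

open Finset

namespace Real

theorem hasSum_pow_div_log_tail {y : ℝ} (hy : |y| < 1) (m : ℕ) :
    HasSum (fun n : ℕ => y ^ (n + m + 1) / ((n + m : ℕ) + 1))
      (-log (1 - y) - ∑ i ∈ range m, y ^ (i + 1) / (i + 1)) :=
  (hasSum_nat_add_iff' m).mpr (hasSum_pow_div_log_of_abs_lt_one hy)

theorem hasSum_pow_add_three_div {y : ℝ} (hy : |y| < 1) :
    HasSum (fun n : ℕ => y ^ (n + 3) / ((n : ℝ) + 3)) (-log (1 - y) - y - y ^ 2 / 2) := by
  convert hasSum_pow_div_log_tail hy 2 using 1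
  · ext n; push_cast; ring_nf
  · simp only [sum_range_succ, sum_range_zero]; norm_num; ring

end Real

theorem hasSum_pow_add_of_abs_lt_one {y : ℝ} (hy : |y| < 1) (m : ℕ) :
    HasSum (fun n : ℕ => y ^ (n + m)) (y ^ m / (1 - y)) := by
  simpa only [pow_add, mul_comm, div_eq_mul_inv] using
    (hasSum_geometric_of_abs_lt_one hy).mul_left (y ^ m)

theorem coeff_eq_half_sub_inv (k : ℕ) :
    ((k : ℝ) + 1) / (2 * ((k : ℝ) + 3)) = 1 / 2 - 1 / ((k : ℝ) + 3) := by
  field_simp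
  ring

theorem stmt_3 (y : ℝ) (h0 : 0 < y) (h1 : y < 1) :
    Summable (fun k : ℕ => (((k:ℝ) + 1) / (2 * ((k:ℝ) + 3))) * y ^ (k + 3)) ∧
    Real.log (1 - y) + y * (2 - y) / (2 * (1 - y))
      = ∑' k : ℕ, (((k:ℝ) + 1) / (2 * ((k:ℝ) + 3))) * y ^ (k + 3) := by
  have hy : |y| < 1 := abs_lt.mpr ⟨by linarith, h1⟩
  have hsum : HasSum (fun k : ℕ => (((k:ℝ) + 1) / (2 * ((k:ℝ) + 3))) * y ^ (k + 3))
      (y ^ 3 / (1 - y) / 2 - (-Real.log (1 - y) - y - y ^ 2 / 2)) := by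
    simp_rw [coeff_eq_half_sub_inv, sub_mul, one_div_mul_eq_div]
    exact ((hasSum_pow_add_of_abs_lt_one hy 3).div_const 2).sub
      (Real.hasSum_pow_add_three_div hy)
  refine ⟨hsum.summable, ?_⟩
  have hy1 : 1 - y ≠ 0 := by linarith
  rw [hsum.tsum_eq]
  field_simp
  ring
end

section
/- Let n, p be integers with 2 ≤ p ≤ n-2 and define I(n,p) = ∫_{-1}^{1} x·(x+n-p)^{n-p-1}·(p-x)^{p-1} dx. Then I(n,p) = 0 if and only if 2p = n; moreover I(n,p) > 0 if 2p < n and I(n,p) < 0 if 2p > n. -/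
/-!
With `q = n - p` the integral is `I p q = ∫_{-1}^{1} x (x + q)^(q-1) (p - x)^(p-1) dx`, and the
substitution `x ↦ -x` gives `I q p = -I p q`, so everything follows from `0 < I p q` for `p < q`.
Folding the integral onto `[0, 1]` leaves the integrand
`x ((q + x)^(q-1) (p - x)^(p-1) - (q - x)^(q-1) (p + x)^(p-1))`, which is positive because
`t ↦ (t - 1) (log (t + x) - log (t - x))` is strictly increasing on `(1, ∞)` for `0 < x ≤ 1`.
-/

open Real Set intervalIntegral
open MeasureTheory (volume)

theorem intervalIntegral.integral_symm_eq_integral_add_comp_neg {f : ℝ → ℝ} {a : ℝ}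
    (hf : IntervalIntegrable f volume (-a) a) :
    ∫ x in -a..a, f x = ∫ x in 0..a, (f x + f (-x)) := by
  have h0 : (0 : ℝ) ∈ uIcc (-a) a := by
    rcases le_total 0 a with h | h
    · exact mem_uIcc_of_le (by linarith) h
    · exact mem_uIcc_of_ge h (by linarith)
  have hf₁ : IntervalIntegrable f volume (-a) 0 :=
    hf.mono_set (uIcc_subset_uIcc left_mem_uIcc h0)
  have hf₂ : IntervalIntegrable f volume 0 a :=
    hf.mono_set (uIcc_subset_uIcc h0 right_mem_uIcc)
  have hf₂' : IntervalIntegrable (fun x => f (-x)) volume 0 a := by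
    simpa using (IntervalIntegrable.iff_comp_neg (by simp)).1 hf₁.symm
  rw [integral_add hf₂ hf₂', integral_comp_neg, neg_zero,
    ← integral_add_adjacent_intervals hf₁ hf₂, add_comm]

theorem strictMonoOn_sub_one_mul_log_sub_log {x : ℝ} (hx₀ : 0 < x) (hx₁ : x ≤ 1) :
    StrictMonoOn (fun t => (t - 1) * (log (t + x) - log (t - x))) (Ioi 1) := by
  have hpos : ∀ t ∈ Ioi (1 : ℝ), 0 < t + x ∧ 0 < t - x := fun t (ht : 1 < t) =>
    ⟨by linarith, by linarith⟩
  apply strictMonoOn_of_deriv_pos (convex_Ioi 1)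
  · refine (continuousOn_id.sub continuousOn_const).mul (ContinuousOn.sub ?_ ?_)
    · exact (continuousOn_id.add continuousOn_const).log fun t ht => (hpos t ht).1.ne'
    · exact (continuousOn_id.sub continuousOn_const).log fun t ht => (hpos t ht).2.ne'
  intro t ht
  rw [interior_Ioi] at ht
  obtain ⟨hp, hm⟩ := hpos t ht
  have hderiv : HasDerivAt (fun t => (t - 1) * (log (t + x) - log (t - x)))
      (1 * (log (t + x) - log (t - x)) + (t - 1) * ((t + x)⁻¹ - (t - x)⁻¹)) t := by
    refine ((hasDerivAt_id t).sub_const 1).mul (HasDerivAt.sub ?_ ?_)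
    · simpa using ((hasDerivAt_id t).add_const x).log hp.ne'
    · simpa using ((hasDerivAt_id t).sub_const x).log hm.ne'
  rw [hderiv.deriv]
  -- `log u < u - 1` at `u = (t - x) / (t + x)`, and `x ≤ 1` gives `(t - 1) / (t - x) ≤ 1`.
  have hlog : 2 * x / (t + x) < log (t + x) - log (t - x) := by
    have hne : (t - x) / (t + x) ≠ 1 := by
      rw [Ne, div_eq_one_iff_eq hp.ne']
      linarith
    have h := log_lt_sub_one_of_pos (div_pos hm hp) hne
    rw [log_div hm.ne' hp.ne'] at h
    calc 2 * x / (t + x) = -((t - x) / (t + x) - 1) := by field_simp; ring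
      _ < _ := by linarith
  have hle : 2 * x * (t - 1) / ((t + x) * (t - x)) ≤ 2 * x / (t + x) := by
    rw [div_le_div_iff₀ (by positivity) hp]
    nlinarith [mul_nonneg (mul_nonneg hp.le hp.le) hx₀.le]
  have hcross :
      (t - 1) * ((t + x)⁻¹ - (t - x)⁻¹) = -(2 * x * (t - 1) / ((t + x) * (t - x))) := by
    field_simp; ring
  rw [hcross]
  linarith

theorem pow_mul_pow_lt_pow_mul_pow {p q : ℕ} (hp : 2 ≤ p) (hpq : p < q) {x : ℝ} (hx₀ : 0 < x)
    (hx₁ : x ≤ 1) :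
    ((q : ℝ) - x) ^ (q - 1) * ((p : ℝ) + x) ^ (p - 1)
      < ((q : ℝ) + x) ^ (q - 1) * ((p : ℝ) - x) ^ (p - 1) := by
  have hp' : (1 : ℝ) < p := by exact_mod_cast hp
  have hq' : (1 : ℝ) < q := by exact_mod_cast (by omega : 1 < q)
  have hmono := strictMonoOn_sub_one_mul_log_sub_log hx₀ hx₁ (mem_Ioi.2 hp') (mem_Ioi.2 hq')
    (by exact_mod_cast hpq)
  have hpx : 0 < (p : ℝ) - x := by linarith
  have hqx : 0 < (q : ℝ) - x := by linarith
  rw [← log_lt_log_iff (by positivity) (by positivity), log_mul (by positivity) (by positivity),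
    log_mul (by positivity) (by positivity), log_pow, log_pow, log_pow, log_pow,
    Nat.cast_pred (by omega), Nat.cast_pred (by omega)]
  simp only at hmono
  linarith

noncomputable def I (p q : ℕ) : ℝ :=
  ∫ x in (-1 : ℝ)..1, x * (x + q) ^ (q - 1) * ((p : ℝ) - x) ^ (p - 1)

theorem I_swap (p q : ℕ) : I q p = -I p q := by
  have h := integral_comp_neg (a := -1) (b := 1)
    fun x : ℝ => x * (x + q) ^ (q - 1) * ((p : ℝ) - x) ^ (p - 1)
  rw [neg_neg] at h
  rw [I, I, ← h, ← integral_neg]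
  refine integral_congr fun x _ => ?_
  ring

theorem I_pos {p q : ℕ} (hp : 2 ≤ p) (hpq : p < q) : 0 < I p q := by
  rw [I, integral_symm_eq_integral_add_comp_neg (a := 1)
    (Continuous.intervalIntegrable (by fun_prop) _ _)]
  refine intervalIntegral_pos_of_pos_on (Continuous.intervalIntegrable (by fun_prop) _ _)
    (fun x ⟨hx₀, hx₁⟩ => ?_) (by norm_num)
  have key := pow_mul_pow_lt_pow_mul_pow hp hpq hx₀ hx₁.le
  have h : x * (x + q) ^ (q - 1) * ((p : ℝ) - x) ^ (p - 1)
      + -x * (-x + q) ^ (q - 1) * ((p : ℝ) - -x) ^ (p - 1)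
      = x * ((q + x) ^ (q - 1) * ((p : ℝ) - x) ^ (p - 1)
        - ((q : ℝ) - x) ^ (q - 1) * (p + x) ^ (p - 1)) := by ring
  rw [h]
  exact mul_pos hx₀ (sub_pos.2 key)

theorem stmt_4 (n p : ℕ) (hp : 2 ≤ p) (hn : p + 2 ≤ n) :
    ((∫ x in (-1:ℝ)..1, x * (x + (n:ℝ) - p) ^ (n - p - 1) * ((p:ℝ) - x) ^ (p - 1)) = 0
      ↔ 2 * p = n) ∧
    (2 * p < n →
      0 < ∫ x in (-1:ℝ)..1, x * (x + (n:ℝ) - p) ^ (n - p - 1) * ((p:ℝ) - x) ^ (p - 1)) ∧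
    (n < 2 * p →
      (∫ x in (-1:ℝ)..1, x * (x + (n:ℝ) - p) ^ (n - p - 1) * ((p:ℝ) - x) ^ (p - 1)) < 0) := by
  obtain ⟨q, rfl⟩ : ∃ q, n = p + q := ⟨n - p, by omega⟩
  have hq : 2 ≤ q := by omega
  have hI : ∫ x in (-1:ℝ)..1, x * (x + ((p + q : ℕ) : ℝ) - p) ^ (p + q - p - 1)
      * ((p : ℝ) - x) ^ (p - 1) = I p q := by
    rw [I, Nat.add_sub_cancel_left]
    refine integral_congr fun x _ => ?_
    push_cast
    ring
  have hpos : p < q → 0 < I p q := I_pos hp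
  have hneg : q < p → I p q < 0 := fun h => by
    linarith [I_swap p q, I_pos hq h]
  rw [hI]
  refine ⟨⟨fun h0 => ?_, fun h => ?_⟩, fun h => hpos (by omega), fun h => hneg (by omega)⟩
  · rcases lt_trichotomy p q with h | h | h
    · exact absurd h0 (hpos h).ne'
    · omega
    · exact absurd h0 (hneg h).ne
  · obtain rfl : p = q := by omega
    linarith [I_swap p p]
end

section
/- For integers p, n with 2 ≤ p and 2p < n ≤ 2p + (n-2p) (i.e. 2 ≤ p < n/2 and p ≤ n-2), one has (p-1)^p·(n-p+1)^{n-p} < (p+1)^p·(n-p-1)^{n-p}. -/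
/-!
Writing `q = n - p`, the claim is that `((x + 1) / (x - 1)) ^ x` is strictly decreasing on the
integers `x ≥ 2`, so it suffices to compare consecutive values. For `x = m`, put
`a = (m + 2) * (m - 1)`, so that `a + 2 = m * (m + 1)`; the consecutive comparison becomes
`a ^ m * (m + 2) < (a + 2) ^ m * m`, which already follows from the first three terms of the
binomial expansion of `(a + 2) ^ m`.
-/

theorem three_terms_le_add_pow {R : Type*} [CommSemiring R] [PartialOrder R] [IsOrderedRing R]
    {a b : R} (ha : 0 ≤ a) (hb : 0 ≤ b) (n : ℕ) :
    a ^ (n + 2) + (n + 2) * a ^ (n + 1) * b + (n + 2).choose 2 * a ^ n * b ^ 2 ≤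
      (a + b) ^ (n + 2) := by
  rw [add_pow, Finset.sum_range_succ, Finset.sum_range_succ, Finset.sum_range_succ]
  have hsymm : (n + 2).choose n = (n + 2).choose 2 := Nat.choose_symm_add
  simp only [Nat.choose_self, Nat.choose_succ_self_right, Nat.sub_self, hsymm,
    show n + 2 - (n + 1) = 1 by omega, show n + 2 - n = 2 by omega]
  have hrest : 0 ≤ ∑ k ∈ Finset.range n, a ^ k * b ^ (n + 2 - k) * ((n + 2).choose k : R) := by
    positivity
  refine le_of_le_of_eq (le_add_of_nonneg_left hrest) ?_
  push_cast
  ring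

theorem sub_one_pow_mul_add_two_pow_lt {m : ℕ} (hm : 2 ≤ m) :
    (m - 1) ^ m * (m + 2) ^ (m + 1) < (m + 1) ^ m * m ^ (m + 1) := by
  obtain ⟨j, rfl⟩ := Nat.exists_eq_add_of_le' hm
  set a := (j + 4) * (j + 1) with ha
  have hchoose : (j + 2).choose 2 * 2 = (j + 2) * (j + 1) := by
    rw [← Nat.add_one_mul_choose_eq, Nat.choose_one_right]
  have hbinom := three_terms_le_add_pow (Nat.zero_le a) (Nat.zero_le 2) j
  have hquad : a ^ 2 * (j + 4) < (a ^ 2 + 2 * (j + 2) * a + 2 * (j + 2) * (j + 1)) * (j + 2) := by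
    rw [ha]; nlinarith
  have hpos : 0 < a ^ j := by positivity
  calc (j + 2 - 1) ^ (j + 2) * (j + 2 + 2) ^ (j + 2 + 1) = a ^ j * (a ^ 2 * (j + 4)) := by
        rw [show j + 2 - 1 = j + 1 by omega, ha, mul_pow, mul_pow]; ring
    _ < a ^ j * ((a ^ 2 + 2 * (j + 2) * a + 2 * (j + 2) * (j + 1)) * (j + 2)) :=
        Nat.mul_lt_mul_of_pos_left hquad hpos
    _ = (a ^ (j + 2) + (j + 2) * a ^ (j + 1) * 2 + (j + 2).choose 2 * a ^ j * 2 ^ 2) * (j + 2) := by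
        rw [show (j + 2).choose 2 * a ^ j * 2 ^ 2 = (j + 2).choose 2 * 2 * (2 * a ^ j) by ring,
          hchoose]
        ring
    _ ≤ (a + 2) ^ (j + 2) * (j + 2) := Nat.mul_le_mul_right _ hbinom
    _ = (j + 2 + 1) ^ (j + 2) * (j + 2) ^ (j + 2 + 1) := by
        rw [show a + 2 = (j + 2) * (j + 3) by rw [ha]; ring, mul_pow]; ring

theorem lt_of_mul_lt_mul_of_mul_lt_mul {a b w x y z : ℕ} (h₁ : a * x < b * y) (h₂ : y * z < x * w) :
    a * z < b * w := by
  have hxy : 0 < x * y := Nat.mul_pos (Nat.pos_of_mul_pos_right (h₂.trans_le' (Nat.zero_le _)))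
    (Nat.pos_of_mul_pos_left (h₁.trans_le' (Nat.zero_le _)))
  refine Nat.lt_of_mul_lt_mul_right (a := x * y) ?_
  calc a * z * (x * y) = a * x * (y * z) := by ring
    _ < b * y * (x * w) := Nat.mul_lt_mul'' h₁ h₂
    _ = b * w * (x * y) := by ring

theorem sub_one_pow_mul_add_one_pow_lt {p q : ℕ} (hp : 2 ≤ p) (hpq : p < q) :
    (p - 1) ^ p * (q + 1) ^ q < (p + 1) ^ p * (q - 1) ^ q := by
  induction q, hpq using Nat.le_induction with
  | base => simpa using sub_one_pow_mul_add_two_pow_lt hp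
  | succ q hpq ih =>
    simpa using lt_of_mul_lt_mul_of_mul_lt_mul ih (sub_one_pow_mul_add_two_pow_lt (by omega))

theorem stmt_5_general (n p : ℕ) (hp : 2 ≤ p) (h2p : 2 * p < n) :
    (p - 1) ^ p * (n - p + 1) ^ (n - p) < (p + 1) ^ p * (n - p - 1) ^ (n - p) :=
  sub_one_pow_mul_add_one_pow_lt hp (by omega)

theorem stmt_5 (n p : ℕ) (hp : 2 ≤ p) (hn : p + 2 ≤ n) (h2p : 2 * p < n) :
    (p - 1) ^ p * (n - p + 1) ^ (n - p) < (p + 1) ^ p * (n - p - 1) ^ (n - p) :=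
  stmt_5_general n p hp h2p
end

section
/- For integers k ≥ 3 and l ≥ 2, the double integral I(k,l) = ∫_{x=0}^{k} ∫_{y=0}^{k+l-x} (x-(k-1))·x^{k-1}·y^{l-1} dy dx is strictly negative. -/
/-!
Integrating in `y` first leaves `(1/l) ∫₀^k (x - (k-1)) x^(k-1) (k + l - x)^l dx`. Expanding
`(k + l - x)^l = ∑ⱼ C(l,j) l^(l-j) (k - x)^j` reduces this to the moments
`∫₀^k (x - (k-1)) x^(k-1) (k - x)^j dx = (1 - (k-1) j) / (k + j + 1) · ∫₀^k x^(k-1) (k - x)^j dx`,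
which follow from the recurrences of the Beta integral. Only the moment with `j = 0` is positive,
and the terms with `j = 1, 2` already outweigh it.
-/

open intervalIntegral Finset

noncomputable def scaledBetaIntegral (c : ℝ) (m j : ℕ) : ℝ :=
  ∫ x in (0:ℝ)..c, x ^ m * (c - x) ^ j

section scaledBetaIntegral

variable (c : ℝ) (m j : ℕ)

theorem scaledBetaIntegral_pos (hc : 0 < c) : 0 < scaledBetaIntegral c m j := by
  refine intervalIntegral_pos_of_pos_on ((by fun_prop : Continuous _).intervalIntegrable _ _)
    (fun x hx => ?_) hc
  have : 0 < x := hx.1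
  have : 0 < c - x := sub_pos.2 hx.2
  positivity

theorem scaledBetaIntegral_succ_left_add_succ_right :
    scaledBetaIntegral c (m + 1) j + scaledBetaIntegral c m (j + 1) =
      c * scaledBetaIntegral c m j := by
  simp only [scaledBetaIntegral]
  rw [← integral_add, ← integral_const_mul]
  · congr 1; ext x; ring
  all_goals exact (by fun_prop : Continuous _).intervalIntegrable _ _

theorem succ_mul_scaledBetaIntegral_succ_right :
    (m + 1) * scaledBetaIntegral c m (j + 1) = (j + 1) * scaledBetaIntegral c (m + 1) j := by
  have hderiv : ∀ x ∈ Set.uIcc 0 c, HasDerivAt (fun x => x ^ (m + 1) * (c - x) ^ (j + 1))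
      ((m + 1) * (x ^ m * (c - x) ^ (j + 1)) - (j + 1) * (x ^ (m + 1) * (c - x) ^ j)) x := by
    intro x _
    refine ((hasDerivAt_pow (m + 1) x).fun_mul
      (((hasDerivAt_id' x).const_sub c).fun_pow (j + 1))).congr_deriv ?_
    push_cast
    ring
  have hftc := integral_eq_sub_of_hasDerivAt hderiv
    ((by fun_prop : Continuous _).intervalIntegrable _ _)
  rw [integral_sub, integral_const_mul, integral_const_mul] at hftc
  · simp only [sub_self, zero_pow (Nat.succ_ne_zero _), mul_zero, zero_mul, sub_zero] at hftc
    simp only [scaledBetaIntegral]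
    linarith
  all_goals exact (by fun_prop : Continuous _).intervalIntegrable _ _

theorem scaledBetaIntegral_succ_right :
    (m + j + 2) * scaledBetaIntegral c m (j + 1) = (j + 1) * c * scaledBetaIntegral c m j := by
  linear_combination succ_mul_scaledBetaIntegral_succ_right c m j +
    (j + 1) * scaledBetaIntegral_succ_left_add_succ_right c m j

theorem scaledBetaIntegral_succ_left :
    (m + j + 2) * scaledBetaIntegral c (m + 1) j = (m + 1) * c * scaledBetaIntegral c m j := by
  linear_combination (m + j + 2) * scaledBetaIntegral_succ_left_add_succ_right c m j -
    scaledBetaIntegral_succ_right c m j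

end scaledBetaIntegral

theorem integral_sub_mul_pow_mul_sub_pow (n j : ℕ) :
    ∫ x in (0:ℝ)..(n + 1), (x - n) * x ^ n * (n + 1 - x) ^ j =
      (1 - n * j) / (n + j + 2) * scaledBetaIntegral (n + 1) n j := by
  have hsplit : ∫ x in (0:ℝ)..(n + 1), (x - n) * x ^ n * (n + 1 - x) ^ j =
      scaledBetaIntegral (n + 1) (n + 1) j - n * scaledBetaIntegral (n + 1) n j := by
    simp only [scaledBetaIntegral]
    rw [← integral_const_mul, ← integral_sub]
    · congr 1; ext x; ring
    all_goals exact (by fun_prop : Continuous _).intervalIntegrable _ _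
  rw [hsplit, div_mul_eq_mul_div, eq_div_iff (by positivity)]
  linear_combination scaledBetaIntegral_succ_left ((n:ℝ) + 1) n j

theorem integral_sub_mul_pow_mul_add_sub_pow (n l : ℕ) :
    ∫ x in (0:ℝ)..(n + 1), (x - n) * x ^ n * (n + 1 + l - x) ^ l =
      ∑ j ∈ range (l + 1), (l:ℝ) ^ (l - j) * l.choose j *
        ((1 - n * j) / (n + j + 2) * scaledBetaIntegral (n + 1) n j) := by
  have hexpand : ∀ x : ℝ, (x - n) * x ^ n * (n + 1 + l - x) ^ l =
      ∑ j ∈ range (l + 1), (l:ℝ) ^ (l - j) * l.choose j * ((x - n) * x ^ n * (n + 1 - x) ^ j) := by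
    intro x
    rw [show (n:ℝ) + 1 + l - x = (n + 1 - x) + l by ring, add_pow, mul_sum]
    exact sum_congr rfl fun j _ => by ring
  simp_rw [hexpand]
  rw [integral_finsetSum fun j _ => (by fun_prop : Continuous _).intervalIntegrable _ _]
  refine sum_congr rfl fun j _ => ?_
  rw [integral_const_mul, integral_sub_mul_pow_mul_sub_pow]

theorem sum_range_three_neg (n l : ℕ) (hn : 2 ≤ n) (hl : 2 ≤ l) :
    ∑ j ∈ range 3, (l:ℝ) ^ (l - j) * l.choose j *
      ((1 - n * j) / (n + j + 2) * scaledBetaIntegral (n + 1) n j) < 0 := by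
  obtain ⟨m, rfl⟩ : ∃ m, l = m + 2 := ⟨l - 2, by omega⟩
  set B := scaledBetaIntegral ((n:ℝ) + 1) n
  have hB0 : 0 < B 0 := scaledBetaIntegral_pos _ _ _ (by positivity)
  have hB1 : B 1 = (n + 1) / (n + 2) * B 0 := by
    rw [div_mul_eq_mul_div, eq_div_iff (by positivity)]
    linear_combination scaledBetaIntegral_succ_right ((n:ℝ) + 1) n 0
  have hB2 : B 2 = 2 * (n + 1) / (n + 3) * B 1 := by
    rw [div_mul_eq_mul_div, eq_div_iff (by positivity)]
    linear_combination scaledBetaIntegral_succ_right ((n:ℝ) + 1) n 1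
  simp only [sum_range_succ, range_zero, sum_empty, Nat.choose_zero_right, Nat.choose_one_right,
    Nat.cast_choose_two]
  push_cast
  rw [hB2, hB1]
  have hn' : (2:ℝ) ≤ n := by exact_mod_cast hn
  have hm : (0:ℝ) ≤ m := m.cast_nonneg
  calc _ = (m + 2) ^ (m + 1) * B 0 / ((n + 2) * (n + 3) * (n + 4)) *
        ((m + 2) * (n + 3) * (n + 4) + (m + 2) * (1 - n) * (n + 1) * (n + 4) +
          (m + 1) * (1 - 2 * n) * (n + 1) ^ 2) := by
        field_simp
        ring
    _ < 0 := mul_neg_of_pos_of_neg (by positivity) (by nlinarith [mul_nonneg hm (sub_nonneg.2 hn')])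

theorem integral_sub_mul_pow_mul_add_sub_pow_neg (n l : ℕ) (hn : 2 ≤ n) (hl : 2 ≤ l) :
    ∫ x in (0:ℝ)..(n + 1), (x - n) * x ^ n * (n + 1 + l - x) ^ l < 0 := by
  rw [integral_sub_mul_pow_mul_add_sub_pow, ← sum_range_add_sum_Ico _ (by omega : 3 ≤ l + 1)]
  have htail : ∑ j ∈ Ico 3 (l + 1), (l:ℝ) ^ (l - j) * l.choose j *
      ((1 - n * j) / (n + j + 2) * scaledBetaIntegral (n + 1) n j) ≤ 0 := by
    refine sum_nonpos fun j hj => mul_nonpos_of_nonneg_of_nonpos (by positivity) ?_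
    have hnj : 1 ≤ n * j := Nat.one_le_iff_ne_zero.2 (by have := (mem_Ico.1 hj).1; positivity)
    refine mul_nonpos_of_nonpos_of_nonneg (div_nonpos_of_nonpos_of_nonneg ?_ (by positivity))
      (scaledBetaIntegral_pos _ _ _ (by positivity)).le
    exact sub_nonpos.2 (by exact_mod_cast hnj)
  linarith [sum_range_three_neg n l hn hl]

theorem stmt_6 (k l : ℕ) (hk : 3 ≤ k) (hl : 2 ≤ l) :
    (∫ x in (0:ℝ)..(k:ℝ), ∫ y in (0:ℝ)..((k:ℝ) + l - x),
      (x - ((k:ℝ) - 1)) * x ^ (k - 1) * y ^ (l - 1)) < 0 := by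
  obtain ⟨n, rfl⟩ : ∃ n, k = n + 1 := ⟨k - 1, by omega⟩
  have hl1 : 1 ≤ l := by omega
  have hinner : ∀ C u : ℝ, ∫ y in (0:ℝ)..u, C * y ^ (l - 1) = C * u ^ l / l := by
    intro C u
    rw [integral_const_mul, integral_pow, Nat.sub_add_cancel hl1, zero_pow (by omega), sub_zero,
      Nat.cast_sub hl1, Nat.cast_one, sub_add_cancel, mul_div_assoc]
  simp only [hinner, Nat.add_sub_cancel, Nat.cast_add, Nat.cast_one, add_sub_cancel_right]
  rw [integral_div]
  exact div_neg_of_neg_of_pos (integral_sub_mul_pow_mul_add_sub_pow_neg n l (by omega) hl)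
    (by positivity)
end

section
/- For every integer l ≥ 2, the double integral J(l) = ∫_{x=0}^{2} ∫_{y=0}^{2+l-x} x·(y-(l-1))·y^{l-1} dy dx is strictly positive. -/
/-! With `n = l - 1` and `c = 2 + l - x`, the inner integral is computed in closed form as
`x c ^ (n + 1) ((n + 1) (2 - x) + 1) / ((n + 1) (n + 2))`, which is positive for `0 < x < 2`. -/

theorem integral_sub_mul_pow (a c : ℝ) (n : ℕ) :
    ∫ y in (0:ℝ)..c, (y - a) * y ^ n = c ^ (n + 2) / (n + 2) - a * c ^ (n + 1) / (n + 1) := by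
  have hsplit : ∀ y : ℝ, (y - a) * y ^ n = y ^ (n + 1) - a * y ^ n := fun y => by ring
  simp_rw [hsplit]
  rw [intervalIntegral.integral_sub (by simp) (by simp), intervalIntegral.integral_const_mul,
    integral_pow, integral_pow]
  push_cast
  ring

theorem integral_sub_self_mul_pow_pos (n : ℕ) (c : ℝ) (h : n * (n + 2) < (n + 1) * c) :
    0 < ∫ y in (0:ℝ)..c, (y - n) * y ^ n := by
  have hc : 0 < c := by nlinarith [n.cast_nonneg (α := ℝ)]
  rw [integral_sub_mul_pow, pow_succ c (n + 1)]
  have hfactor : c ^ (n + 1) * c / (n + 2) - n * c ^ (n + 1) / (n + 1)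
      = c ^ (n + 1) * ((n + 1) * c - n * (n + 2)) / ((n + 1) * (n + 2)) := by
    field_simp
  rw [hfactor]
  have := sub_pos.2 h
  positivity

theorem stmt_10 (l : ℕ) (hl : 2 ≤ l) :
    0 < ∫ x in (0:ℝ)..2, ∫ y in (0:ℝ)..(2 + (l:ℝ) - x),
      x * (y - ((l:ℝ) - 1)) * y ^ (l - 1) := by
  obtain ⟨n, rfl⟩ : ∃ n, l = n + 1 := ⟨l - 1, by omega⟩
  have hinner : ∀ x : ℝ, (∫ y in (0:ℝ)..(2 + ((n + 1 : ℕ) : ℝ) - x),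
      x * (y - (((n + 1 : ℕ) : ℝ) - 1)) * y ^ (n + 1 - 1))
      = x * ∫ y in (0:ℝ)..(n + 3 - x), (y - n) * y ^ n := fun x => by
    rw [← intervalIntegral.integral_const_mul]
    push_cast
    simp only [add_sub_cancel_right, mul_assoc]
    congr 1
    ring
  simp_rw [hinner]
  apply intervalIntegral.intervalIntegral_pos_of_pos_on
  · simp only [integral_sub_mul_pow]
    exact (by fun_prop : Continuous _).intervalIntegrable _ _
  · rintro x ⟨hx0, hx2⟩
    exact mul_pos hx0 (integral_sub_self_mul_pow_pos n _ (by nlinarith))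
  · norm_num
end

section
/- For every integer n ≥ 5, the ratio (n-3)·((n-2)^{n-1} - (n-3)^{n-1}) / ((n-1)·((n-2)^{n-2} - (n-3)^{n-2})) is strictly greater than n-4. -/
/-!
Write `P = (n-2)^(n-2)` and `Q = (n-3)^(n-2)`, so the numerator is `(n-3)((n-2)P - (n-3)Q)`.
Clearing the positive denominator `(n-1)(P-Q)`, the claim becomes
`(n-3)((n-2)P - (n-3)Q) - (n-4)(n-1)(P-Q) > 0`, and the left side is identically `2P + (n-5)Q`.
-/

lemma sub_three_mul_sub_sub_four_mul_eq (x P Q : ℝ) :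
    (x - 3) * ((x - 2) * P - (x - 3) * Q) - (x - 4) * (x - 1) * (P - Q) = 2 * P + (x - 5) * Q := by
  ring

lemma sub_four_lt_div_of_lt {x P Q : ℝ} (hx : 5 ≤ x) (hQ : 0 ≤ Q) (hQP : Q < P) :
    x - 4 < (x - 3) * ((x - 2) * P - (x - 3) * Q) / ((x - 1) * (P - Q)) := by
  rw [lt_div_iff₀ (by nlinarith)]
  have := sub_three_mul_sub_sub_four_mul_eq x P Q
  linarith [mul_nonneg (sub_nonneg.mpr hx) hQ]

theorem stmt_17 (n : ℕ) (hn : 5 ≤ n) :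
    (n:ℝ) - 4 <
      ((n:ℝ) - 3) * (((n:ℝ) - 2) ^ (n - 1) - ((n:ℝ) - 3) ^ (n - 1))
        / (((n:ℝ) - 1) * (((n:ℝ) - 2) ^ (n - 2) - ((n:ℝ) - 3) ^ (n - 2))) := by
  have hx : (5 : ℝ) ≤ n := by exact_mod_cast hn
  have hQ : (0 : ℝ) ≤ ((n : ℝ) - 3) ^ (n - 2) := pow_nonneg (by linarith) _
  have hQP : ((n : ℝ) - 3) ^ (n - 2) < ((n : ℝ) - 2) ^ (n - 2) :=
    pow_lt_pow_left₀ (by linarith) (by linarith) (by omega)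
  rw [show n - 1 = n - 2 + 1 by omega, pow_succ', pow_succ']
  exact sub_four_lt_div_of_lt hx hQ hQP
end
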